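/- arXiv:1908.04243 — 2 statements merged into one kernel-verified Lean document; each statement's English description precedes it below -/
import Mathlib

section
/- Let Σ be symmetric positive definite, L a k×p matrix with L Q L^T invertible, where Q = Σ^{-1} - (Σ^{-1} 1 1^T Σ^{-1})/(1^T Σ^{-1} 1). Define P = Q L^T (L Q L^T)^{-1/2} and A = Q - P P^T = Q - Q L^T (L Q L^T)^{-1} L Q. Then A is symmetric positive semidefinite and satisfies A Σ A = A. -/
open Matrix

section helpers
variable {p : ℕ}

lemma vecMulVec_mul' (u v : Fin p → ℝ) (M : Matrix (Fin p) (Fin p) ℝ) :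
    vecMulVec u v * M = vecMulVec u (v ᵥ* M) := by
  ext i j
  simp [vecMulVec_apply, mul_apply, vecMul, dotProduct, Finset.mul_sum, mul_assoc]

lemma vecMul_vecMulVec' (x u v : Fin p → ℝ) :
    x ᵥ* vecMulVec u v = (x ⬝ᵥ u) • v := by
  ext j
  simp [vecMul, vecMulVec_apply, dotProduct, Finset.sum_mul, mul_assoc]

lemma vecMul_smul_mat' (x : Fin p → ℝ) (b : ℝ) (M : Matrix (Fin p) (Fin p) ℝ) :
    x ᵥ* (b • M) = b • (x ᵥ* M) := by
  ext j
  simp [vecMul, dotProduct, Finset.mul_sum]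
  ring_nf
  exact Finset.sum_congr rfl fun i _ => by ring

lemma vecMulVec_zero' (u : Fin p → ℝ) : vecMulVec u (0 : Fin p → ℝ) = 0 := by
  ext i j; simp [vecMulVec_apply]

end helpers

/-- With `Q = Σ⁻¹ - (Σ⁻¹11ᵀΣ⁻¹)/(1ᵀΣ⁻¹1)` and `A = Q - QLᵀ(LQLᵀ)⁻¹LQ`,
the matrix `A` is symmetric positive semidefinite and satisfies `AΣA = A`. -/
theorem stmt_7 (p k : ℕ) (S : Matrix (Fin p) (Fin p) ℝ) (hS : S.PosDef)
    (o : Fin p → ℝ) (ho : o = fun _ => 1)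
    (Q : Matrix (Fin p) (Fin p) ℝ)
    (hQ : Q = S⁻¹ -
      (dotProduct o (S⁻¹.mulVec o))⁻¹ • vecMulVec (S⁻¹.mulVec o) (S⁻¹.vecMul o))
    (L : Matrix (Fin k) (Fin p) ℝ) (hL : L.rank = k)
    (hLQL : IsUnit (L * Q * Lᵀ))
    (A : Matrix (Fin p) (Fin p) ℝ)
    (hA : A = Q - Q * Lᵀ * (L * Q * Lᵀ)⁻¹ * L * Q) :
    A.PosSemidef ∧ A * S * A = A := by
  rcases Nat.eq_zero_or_pos p with hp | hp
  · subst hp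
    have hA0 : A = 0 := Subsingleton.elim _ _
    exact ⟨hA0 ▸ Matrix.PosSemidef.zero, Subsingleton.elim _ _⟩
  have hSinv : (S⁻¹).PosDef := hS.inv
  have hSsym : Sᵀ = S := hS.isHermitian.eq
  have hNsym : (S⁻¹)ᵀ = S⁻¹ := hSinv.isHermitian.eq
  have hdet : IsUnit S.det := isUnit_iff_ne_zero.2 hS.det_pos.ne'
  have ho0 : o ≠ 0 := by
    subst ho
    intro h
    simpa using congrFun h ⟨0, hp⟩
  set c : ℝ := dotProduct o (S⁻¹.mulVec o) with hc
  have hcpos : 0 < c := by simpa [hc] using hSinv.dotProduct_mulVec_pos ho0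
  have hcne : c ≠ 0 := ne_of_gt hcpos
  set u : Fin p → ℝ := S⁻¹ *ᵥ o with hu
  have hv : S⁻¹.vecMul o = u := by
    rw [hu]
    nth_rewrite 1 [← hNsym]
    exact vecMul_transpose _ _
  have hcu : c = o ⬝ᵥ u := rfl
  have hQ' : Q = S⁻¹ - c⁻¹ • vecMulVec u u := by rw [hQ, hv]
  -- Q symmetric
  have hQsym : Qᵀ = Q := by
    rw [hQ', transpose_sub, transpose_smul, hNsym]
    congr 1
    congr 1
    ext i j
    simp [vecMulVec_apply, mul_comm]
  -- o ᵥ* Q = 0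
  have houQ : o ᵥ* Q = 0 := by
    rw [hQ', vecMul_sub, vecMul_smul_mat', vecMul_vecMulVec', ← hcu, smul_smul,
      inv_mul_cancel₀ hcne, one_smul, hv, sub_self]
  -- u ᵥ* S = o
  have huS : u ᵥ* S = o := by
    nth_rewrite 1 [← hSsym]
    rw [vecMul_transpose, hu, mulVec_mulVec, mul_nonsing_inv _ hdet, one_mulVec]
  -- Q * S * Q = Q
  have hQS : Q * S = 1 - c⁻¹ • vecMulVec u o := by
    rw [hQ', sub_mul, smul_mul, vecMulVec_mul', huS, nonsing_inv_mul _ hdet]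
  have hQSQ : Q * S * Q = Q := by
    rw [hQS, sub_mul, one_mul, smul_mul, vecMulVec_mul', houQ, vecMulVec_zero',
      smul_zero, sub_zero]
  -- inverse facts
  set B : Matrix (Fin k) (Fin k) ℝ := (L * Q * Lᵀ)⁻¹ with hB
  have hdetLQL : IsUnit (L * Q * Lᵀ).det := (isUnit_iff_isUnit_det _).mp hLQL
  have hB1 : L * Q * Lᵀ * B = 1 := mul_nonsing_inv _ hdetLQL
  have hB2 : B * (L * Q * Lᵀ) = 1 := nonsing_inv_mul _ hdetLQL
  set M : Matrix (Fin p) (Fin p) ℝ := Q * Lᵀ * B * L * Q with hM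
  have hA' : A = Q - M := hA
  -- helper: right-assoc versions
  have hQSQr : ∀ X : Matrix (Fin p) (Fin p) ℝ, Q * (S * (Q * X)) = Q * X := by
    intro X
    rw [← Matrix.mul_assoc, ← Matrix.mul_assoc, hQSQ]
  have hBr : ∀ X : Matrix (Fin k) (Fin p) ℝ, B * (L * (Q * (Lᵀ * X))) = X := by
    intro X
    calc B * (L * (Q * (Lᵀ * X))) = (B * (L * Q * Lᵀ)) * X := by
          simp only [Matrix.mul_assoc]
      _ = X := by rw [hB2, Matrix.one_mul]
  -- the four products
  have hQSM : Q * S * M = M := by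
    rw [hM]
    calc Q * S * (Q * Lᵀ * B * L * Q) = (Q * S * Q) * Lᵀ * B * L * Q := by
          simp only [Matrix.mul_assoc]
      _ = Q * Lᵀ * B * L * Q := by rw [hQSQ]
  have hMSQ : M * S * Q = M := by
    rw [hM]
    calc Q * Lᵀ * B * L * Q * S * Q = Q * Lᵀ * B * L * (Q * S * Q) := by
          simp only [Matrix.mul_assoc]
      _ = Q * Lᵀ * B * L * Q := by rw [hQSQ]
  have hMSM : M * S * M = M := by
    rw [hM]
    calc Q * Lᵀ * B * L * Q * S * (Q * Lᵀ * B * L * Q)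
        = Q * Lᵀ * (B * (L * ((Q * S * Q) * (Lᵀ * (B * (L * Q)))))) := by
          simp only [Matrix.mul_assoc]
      _ = Q * Lᵀ * (B * (L * (Q * (Lᵀ * (B * (L * Q)))))) := by rw [hQSQ]
      _ = Q * Lᵀ * (B * (L * Q)) := by rw [hBr]
      _ = Q * Lᵀ * B * L * Q := by simp only [Matrix.mul_assoc]
  have hASA : A * S * A = A := by
    rw [hA', sub_mul, sub_mul, mul_sub, mul_sub, hQSQ, hQSM, hMSQ, hMSM]
    abel
  refine ⟨?_, hASA⟩
  -- symmetry of A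
  have hBsym : Bᵀ = B := by
    rw [hB, transpose_nonsing_inv]
    congr 1
    rw [transpose_mul, transpose_mul, transpose_transpose, hQsym, Matrix.mul_assoc]
  have hAsym : Aᵀ = A := by
    rw [hA', hM, transpose_sub, hQsym]
    congr 1
    simp only [transpose_mul, transpose_transpose, hQsym, hBsym]
    simp only [Matrix.mul_assoc]
  have : A = Aᴴ * S * A := by
    rw [conjTranspose_eq_transpose_of_trivial, hAsym, hASA]
  rw [this]
  exact hS.posSemidef.conjTranspose_mul_mul_same A
end

section
/- With Σ symmetric positive definite, P = Q L^T (L Q L^T)^{-1/2} as above, one has P^T Σ P = I_k, the k×k identity matrix. -/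
open Matrix

/-- With `P = QLᵀ(LQLᵀ)^{-1/2}`, one has `Pᵀ Σ P = I`. -/
theorem stmt_9 (p k : ℕ) (S : Matrix (Fin p) (Fin p) ℝ) (hS : S.PosDef)
    (o : Fin p → ℝ) (ho : o = fun _ => 1)
    (Q : Matrix (Fin p) (Fin p) ℝ)
    (hQ : Q = S⁻¹ -
      (dotProduct o (S⁻¹.mulVec o))⁻¹ • vecMulVec (S⁻¹.mulVec o) (S⁻¹.vecMul o))
    (L : Matrix (Fin k) (Fin p) ℝ) (hL : L.rank = k)
    (hLQL : IsUnit (L * Q * Lᵀ))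
    (R : Matrix (Fin k) (Fin k) ℝ) (hRsymm : Rᵀ = R)
    (hRR : R * R = (L * Q * Lᵀ)⁻¹)
    (P : Matrix (Fin p) (Fin k) ℝ) (hP : P = Q * Lᵀ * R) :
    Pᵀ * S * P = 1 := by
  have hdet : IsUnit S.det := isUnit_iff_ne_zero.mpr (ne_of_gt hS.det_pos)
  set A := S⁻¹ with hA
  have hSA : S * A = 1 := mul_nonsing_inv S hdet
  have hAS : A * S = 1 := nonsing_inv_mul S hdet
  have hST : Sᵀ = S := hS.isHermitian
  have hAsymm : Aᵀ = A := by
    rw [hA, transpose_nonsing_inv, hST]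
  set C : Matrix (Fin p) (Fin p) ℝ := replicateCol Unit o * replicateRow Unit o with hC
  set d : ℝ := dotProduct o (S⁻¹.mulVec o) with hd
  set c : ℝ := d⁻¹ with hc
  set M : Matrix (Fin p) (Fin p) ℝ := A * C * A with hM
  have hMeq : vecMulVec (S⁻¹.mulVec o) (S⁻¹.vecMul o) = M := by
    rw [vecMulVec_eq Unit, replicateCol_mulVec, replicateRow_vecMul, hM, hC]
    simp [Matrix.mul_assoc]; rfl
  have hQ' : Q = A - c • M := by rw [hQ, hMeq]
  have hone : (Matrix.of fun (_ _ : Unit) => d) = d • (1 : Matrix Unit Unit ℝ) := by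
    ext i j
    simp [Matrix.one_apply]
  have hCAC : C * A * C = d • C := by
    have h1 : replicateRow Unit o * A * replicateCol Unit o = Matrix.of fun _ _ => d := by
      rw [← replicateRow_vecMul, replicateRow_mul_replicateCol]
      congr 1
      ext _ _
      rw [hd, dotProduct_mulVec]
    calc C * A * C = replicateCol Unit o * (replicateRow Unit o * A * replicateCol Unit o) * replicateRow Unit o := by
          simp only [hC, Matrix.mul_assoc]
      _ = replicateCol Unit o * (d • (1 : Matrix Unit Unit ℝ)) * replicateRow Unit o := by rw [h1, hone]
      _ = d • C := by
          simp only [Matrix.mul_smul, Matrix.smul_mul, Matrix.mul_one, hC]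
  have hMSA : M * S * A = M := by
    calc M * S * A = A * C * (A * S) * A := by simp only [hM, Matrix.mul_assoc]
      _ = M := by rw [hAS]; simp [hM, Matrix.mul_assoc]
  have hASM : A * S * M = M := by
    calc A * S * M = (A * S) * (A * C * A) := by simp only [hM, Matrix.mul_assoc]
      _ = M := by rw [hAS, hM]; simp [Matrix.mul_assoc]
  have hMSM : M * S * M = d • M := by
    calc M * S * M = A * (C * (A * S * A) * C) * A := by
          simp only [hM, Matrix.mul_assoc]
      _ = A * (C * A * C) * A := by
          rw [hAS]; simp [Matrix.mul_assoc]
      _ = d • M := by rw [hCAC]; simp [hM, Matrix.mul_smul, Matrix.smul_mul, Matrix.mul_assoc]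
  have hccd : c * (c * d) = c := by
    rcases eq_or_ne d 0 with h | h
    · simp [hc, h]
    · rw [hc, inv_mul_cancel₀ h, mul_one]
  have hQSQ : Q * S * Q = Q := by
    rw [hQ']
    simp only [Matrix.sub_mul, Matrix.mul_sub, Matrix.smul_mul, Matrix.mul_smul, smul_smul]
    rw [show A * S * A = A by rw [hAS]; simp, hMSA, hASM, hMSM]
    have h5 : c • (M - c • d • M) = c • M - c • M := by
      rw [smul_sub, smul_smul, smul_smul, mul_assoc, hccd]
    rw [h5]
    abel
  have hQsymm : Qᵀ = Q := by
    have hCsym : Cᵀ = C := by simp [hC, transpose_mul]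
    rw [hQ']
    simp [transpose_sub, transpose_smul, transpose_mul, hAsymm, hM, hCsym, Matrix.mul_assoc]
  set B := L * Q * Lᵀ with hB
  have hdB : IsUnit B.det := (isUnit_iff_isUnit_det B).mp hLQL
  have hB1 : B * B⁻¹ = 1 := mul_nonsing_inv B hdB
  have hB2 : B⁻¹ * B = 1 := nonsing_inv_mul B hdB
  have hRBinv : R * B⁻¹ = B⁻¹ * R := by
    rw [← hRR, ← Matrix.mul_assoc]
  have hT : B⁻¹ * (R * (B * R)) = B⁻¹ := by
    rw [← Matrix.mul_assoc B⁻¹ R, ← hRBinv, Matrix.mul_assoc R B⁻¹,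
      ← Matrix.mul_assoc B⁻¹ B, hB2, Matrix.one_mul, hRR]
  have hRBR : R * B * R = 1 := by
    calc R * B * R = B * (B⁻¹ * (R * (B * R))) := by
          rw [← Matrix.mul_assoc B B⁻¹, hB1, Matrix.one_mul, Matrix.mul_assoc]
      _ = B * B⁻¹ := by rw [hT]
      _ = 1 := hB1
  calc Pᵀ * S * P = R * (L * (Q * S * Q) * Lᵀ) * R := by
        rw [hP]
        simp only [transpose_mul, transpose_transpose, hQsymm, hRsymm, Matrix.mul_assoc]
    _ = 1 := by rw [hQSQ, ← hB]; exact hRBR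
end
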